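/- (Similarity lower bound for the attention module.) Let N, D ≥ 1, let R > 1 and R₂ ≥ 0, and let W, W_V ∈ ℝ^{D×D} and X, X̃ ∈ ℝ^{N×D} satisfy ‖W‖ ≤ R, ‖W_V‖ ≤ R, ‖X‖ ≤ R, ‖X̃‖ ≤ R, and ‖X − X̃‖ ≤ R₂ in spectral norm. Define the self-attention map F(X) = D(X)^{-1} · A(X) · X W_V with A(X)_{i,j} = exp((X W Xᵀ)_{i,j}) and D(X) the diagonal matrix of row sums of A(X), and set Y = F(X), Ỹ = F(X̃). Assume ‖Y‖_F = ‖Ỹ‖_F = 1. Then the cosine similarity satisfies f(Y, Ỹ) = tr[Yᵀ Ỹ] ≥ 1 − (1/2)·(5 R⁴ N D)² · R₂² · min{N, D}. In particular, setting α = (1/2)·(5 R⁴ N D)²·R₂²·min{N,D}, the similarity between the attention outputs at two consecutive diffusion steps is at least 1 − α. -/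

import Mathlib

/-!
With `S` the row-softmax of `X W Xᵀ` and `S̃` that of `X̃ W X̃ᵀ`,
`Y - Ỹ = S (X - X̃) W_V + (S - S̃) X̃ W_V`. The first term is small since `‖S‖_F ≤ √N`.
For the second, softmax is Lipschitz row by row (log-sum-exp is 1-Lipschitz for the sup norm,
and `|p - q| ≤ |log p - log q|` on `(0, 1]`), and `X ↦ X W Xᵀ` is Lipschitz on the ball of
radius `R`. With `‖·‖_F ≤ √(min N D) ‖·‖` this gives `‖Y - Ỹ‖_F ≤ 5 R⁴ N D √(min N D) R₂`,
and for unit vectors `tr[Yᵀ Ỹ] = 1 - ‖Y - Ỹ‖_F² / 2`.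
-/

noncomputable def specNorm {m n : ℕ} (A : Matrix (Fin m) (Fin n) ℝ) : ℝ :=
  ‖LinearMap.toContinuousLinearMap (Matrix.toEuclideanLin A)‖

noncomputable def frobNorm {m n : ℕ} (A : Matrix (Fin m) (Fin n) ℝ) : ℝ :=
  Real.sqrt (∑ i, ∑ j, (A i j) ^ 2)

/-- Self-attention: `F(X) = D(X)⁻¹ · A(X) · (X · W_V)` with `A(X)ᵢⱼ = exp((X W Xᵀ)ᵢⱼ)`
and `D(X)` the diagonal matrix of row sums of `A(X)`. -/
noncomputable def attn {N D : ℕ} (W WV : Matrix (Fin D) (Fin D) ℝ)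
    (X : Matrix (Fin N) (Fin D) ℝ) : Matrix (Fin N) (Fin D) ℝ :=
  (Matrix.diagonal fun i => ∑ j, Real.exp ((X * W * X.transpose) i j))⁻¹ *
    (Matrix.of fun i j => Real.exp ((X * W * X.transpose) i j)) * (X * WV)

open Finset Real Matrix
open scoped Matrix.Norms.L2Operator

section SpecNorm

variable {m n p : ℕ}

lemma specNorm_nonneg (A : Matrix (Fin m) (Fin n) ℝ) : 0 ≤ specNorm A :=
  norm_nonneg _

lemma specNorm_transpose (A : Matrix (Fin m) (Fin n) ℝ) : specNorm Aᵀ = specNorm A :=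
  A.l2_opNorm_conjTranspose

lemma specNorm_mul_le (A : Matrix (Fin m) (Fin n) ℝ) (B : Matrix (Fin n) (Fin p) ℝ) :
    specNorm (A * B) ≤ specNorm A * specNorm B :=
  Matrix.l2_opNorm_mul A B

lemma sum_sq_mulVec_le (A : Matrix (Fin m) (Fin n) ℝ) (v : Fin n → ℝ) :
    ∑ i, (A *ᵥ v) i ^ 2 ≤ specNorm A ^ 2 * ∑ j, v j ^ 2 := by
  have h := pow_le_pow_left₀ (norm_nonneg _) (A.l2_opNorm_mulVec (WithLp.toLp 2 v)) 2
  rwa [mul_pow, EuclideanSpace.real_norm_sq_eq, EuclideanSpace.real_norm_sq_eq] at h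

end SpecNorm

section FrobNorm

variable {m n p : ℕ}

lemma frobNorm_nonneg (A : Matrix (Fin m) (Fin n) ℝ) : 0 ≤ frobNorm A :=
  sqrt_nonneg _

lemma frobNorm_sq (A : Matrix (Fin m) (Fin n) ℝ) : frobNorm A ^ 2 = ∑ i, ∑ j, A i j ^ 2 :=
  sq_sqrt <| sum_nonneg fun _ _ => sum_nonneg fun _ _ => sq_nonneg _

lemma frobNorm_le_of_sq_le {A : Matrix (Fin m) (Fin n) ℝ} {c : ℝ} (hc : 0 ≤ c)
    (h : ∑ i, ∑ j, A i j ^ 2 ≤ c ^ 2) : frobNorm A ≤ c :=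
  sqrt_le_iff.mpr ⟨hc, h⟩

lemma frobNorm_eq_norm (A : Matrix (Fin m) (Fin n) ℝ) :
    frobNorm A = ‖WithLp.toLp 2 (Function.uncurry A)‖ := by
  simp only [frobNorm, ← Fintype.sum_prod_type', EuclideanSpace.norm_eq, norm_eq_abs, sq_abs]
  rfl

lemma frobNorm_add_le (A B : Matrix (Fin m) (Fin n) ℝ) :
    frobNorm (A + B) ≤ frobNorm A + frobNorm B := by
  simp only [frobNorm_eq_norm]
  exact norm_add_le (WithLp.toLp 2 (Function.uncurry A)) (WithLp.toLp 2 (Function.uncurry B))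

lemma frobNorm_transpose (A : Matrix (Fin m) (Fin n) ℝ) : frobNorm Aᵀ = frobNorm A := by
  rw [frobNorm, frobNorm, sum_comm]
  rfl

lemma frobNorm_mul_le_frobNorm_mul_specNorm (A : Matrix (Fin m) (Fin n) ℝ)
    (B : Matrix (Fin n) (Fin p) ℝ) : frobNorm (A * B) ≤ frobNorm A * specNorm B := by
  refine frobNorm_le_of_sq_le (mul_nonneg (sqrt_nonneg _) (specNorm_nonneg B)) ?_
  calc ∑ i, ∑ j, (A * B) i j ^ 2 = ∑ i, ∑ j, (Bᵀ *ᵥ A i) j ^ 2 := by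
        simp only [Matrix.mulVec_transpose, Matrix.mul_apply_eq_vecMul]
    _ ≤ ∑ i, specNorm Bᵀ ^ 2 * ∑ k, A i k ^ 2 := sum_le_sum fun i _ => sum_sq_mulVec_le _ _
    _ = (frobNorm A * specNorm B) ^ 2 := by
        rw [← mul_sum, specNorm_transpose, mul_pow, frobNorm_sq, mul_comm]

lemma frobNorm_mul_le_specNorm_mul_frobNorm (A : Matrix (Fin m) (Fin n) ℝ)
    (B : Matrix (Fin n) (Fin p) ℝ) : frobNorm (A * B) ≤ specNorm A * frobNorm B := by
  simpa only [← Matrix.transpose_mul, frobNorm_transpose, specNorm_transpose, mul_comm]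
    using frobNorm_mul_le_frobNorm_mul_specNorm Bᵀ Aᵀ

lemma frobNorm_one : frobNorm (1 : Matrix (Fin n) (Fin n) ℝ) = √n := by
  simp only [frobNorm, one_apply, ite_pow, one_pow, ne_eq, OfNat.ofNat_ne_zero,
    not_false_eq_true, zero_pow, sum_ite_eq, mem_univ, if_true, sum_const, card_univ,
    Fintype.card_fin, nsmul_eq_mul, mul_one]

lemma frobNorm_le_sqrt_min_mul_specNorm (A : Matrix (Fin m) (Fin n) ℝ) :
    frobNorm A ≤ √(min (m : ℝ) n) * specNorm A := by
  rcases le_total (m : ℝ) n with h | h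
  · calc frobNorm A = frobNorm ((1 : Matrix (Fin m) (Fin m) ℝ) * A) := by rw [Matrix.one_mul]
      _ ≤ frobNorm (1 : Matrix (Fin m) (Fin m) ℝ) * specNorm A :=
          frobNorm_mul_le_frobNorm_mul_specNorm 1 A
      _ = _ := by rw [frobNorm_one, min_eq_left h]
  · calc frobNorm A = frobNorm (A * (1 : Matrix (Fin n) (Fin n) ℝ)) := by rw [Matrix.mul_one]
      _ ≤ specNorm A * frobNorm (1 : Matrix (Fin n) (Fin n) ℝ) :=
          frobNorm_mul_le_specNorm_mul_frobNorm A 1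
      _ = _ := by rw [frobNorm_one, min_eq_right h, mul_comm]

lemma frobNorm_sub_sq (A B : Matrix (Fin m) (Fin n) ℝ) :
    frobNorm (A - B) ^ 2 = frobNorm A ^ 2 + frobNorm B ^ 2 - 2 * (Aᵀ * B).trace := by
  have htrace : (Aᵀ * B).trace = ∑ i, ∑ j, A i j * B i j := by
    simp only [trace, diag_apply, mul_apply, transpose_apply]
    exact sum_comm
  simp only [htrace, frobNorm_sq, mul_sum, ← sum_add_distrib, ← sum_sub_distrib]
  exact sum_congr rfl fun _ _ => sum_congr rfl fun _ _ => by rw [Matrix.sub_apply]; ring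

end FrobNorm

section Softmax

variable {ι : Type*} [Fintype ι]

noncomputable def softmax (x : ι → ℝ) : ι → ℝ :=
  fun j => exp (x j) / ∑ k, exp (x k)

lemma exp_le_sum_exp (x : ι → ℝ) (j : ι) : exp (x j) ≤ ∑ k, exp (x k) :=
  single_le_sum (fun k _ => (exp_pos (x k)).le) (mem_univ j)

lemma softmax_pos (x : ι → ℝ) (j : ι) : 0 < softmax x j :=
  div_pos (exp_pos _) ((exp_pos _).trans_le (exp_le_sum_exp x j))

lemma softmax_le_one (x : ι → ℝ) (j : ι) : softmax x j ≤ 1 :=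
  div_le_one_of_le₀ (exp_le_sum_exp x j) (sum_nonneg fun k _ => (exp_pos (x k)).le)

lemma sum_sq_softmax_le_one (x : ι → ℝ) : ∑ j, softmax x j ^ 2 ≤ 1 :=
  calc ∑ j, softmax x j ^ 2 ≤ ∑ j, softmax x j :=
        sum_le_sum fun j _ => pow_le_of_le_one (softmax_pos x j).le (softmax_le_one x j) two_ne_zero
    _ = (∑ k, exp (x k)) / ∑ k, exp (x k) := (sum_div ..).symm
    _ ≤ 1 := div_self_le_one _

lemma log_softmax (x : ι → ℝ) (j : ι) : log (softmax x j) = x j - log (∑ k, exp (x k)) := by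
  rw [softmax, log_div (exp_pos _).ne' ((exp_pos _).trans_le (exp_le_sum_exp x j)).ne', log_exp]

lemma log_sum_exp_le_add [Nonempty ι] {x y : ι → ℝ} {L : ℝ} (h : ∀ k, x k ≤ y k + L) :
    log (∑ k, exp (x k)) ≤ log (∑ k, exp (y k)) + L := by
  have hpos : ∀ z : ι → ℝ, 0 < ∑ k, exp (z k) :=
    fun z => sum_pos (fun k _ => exp_pos (z k)) univ_nonempty
  calc log (∑ k, exp (x k)) ≤ log (exp L * ∑ k, exp (y k)) := by
        refine log_le_log (hpos x) ?_
        rw [mul_sum]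
        exact sum_le_sum fun k _ => by rw [← exp_add]; exact exp_le_exp.2 (by linarith [h k])
    _ = log (∑ k, exp (y k)) + L := by
        rw [log_mul (exp_pos L).ne' (hpos y).ne', log_exp, add_comm]

lemma abs_log_sum_exp_sub_le [Nonempty ι] {x y : ι → ℝ} {L : ℝ} (h : ∀ k, |x k - y k| ≤ L) :
    |log (∑ k, exp (x k)) - log (∑ k, exp (y k))| ≤ L := by
  have hxy := log_sum_exp_le_add (x := x) (y := y) (L := L) fun k => by
    linarith [(abs_le.1 (h k)).2]
  have hyx := log_sum_exp_le_add (x := y) (y := x) (L := L) fun k => by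
    linarith [(abs_le.1 (h k)).1]
  exact abs_sub_le_iff.2 ⟨by linarith, by linarith⟩

lemma abs_sub_le_abs_log_sub {p q : ℝ} (hp : 0 < p) (hq : 0 < q) (hp1 : p ≤ 1) (hq1 : q ≤ 1) :
    |p - q| ≤ |log p - log q| := by
  wlog hqp : q ≤ p generalizing p q
  · rw [abs_sub_comm, abs_sub_comm (log p)]
    exact this hq hp hq1 hp1 (le_of_not_ge hqp)
  -- `log` has slope at least `1 / p ≥ 1` on `[q, p]`
  have hlog : 1 - (p / q)⁻¹ ≤ log p - log q := by
    rw [← log_div hp.ne' hq.ne']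
    exact one_sub_inv_le_log_of_pos (div_pos hp hq)
  rw [inv_div, one_sub_div hp.ne'] at hlog
  have hpq : p - q ≤ (p - q) / p := (le_div_iff₀ hp).2 (by nlinarith)
  rw [abs_of_nonneg (sub_nonneg.2 hqp), abs_of_nonneg (by linarith)]
  linarith

lemma abs_softmax_sub_le {x y : ι → ℝ} {L : ℝ} (h : ∀ k, |x k - y k| ≤ L) (j : ι) :
    |softmax x j - softmax y j| ≤ |x j - y j| + L := by
  have : Nonempty ι := ⟨j⟩
  calc |softmax x j - softmax y j| ≤ |log (softmax x j) - log (softmax y j)| :=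
        abs_sub_le_abs_log_sub (softmax_pos x j) (softmax_pos y j) (softmax_le_one x j)
          (softmax_le_one y j)
    _ = |(x j - y j) - (log (∑ k, exp (x k)) - log (∑ k, exp (y k)))| := by
        rw [log_softmax, log_softmax]; ring_nf
    _ ≤ |x j - y j| + L := (abs_sub _ _).trans (add_le_add_right (abs_log_sum_exp_sub_le h) _)

lemma sum_sq_softmax_sub_le (x y : ι → ℝ) :
    ∑ j, (softmax x j - softmax y j) ^ 2 ≤ 4 * Fintype.card ι * ∑ j, (x j - y j) ^ 2 := by
  set S := ∑ j, (x j - y j) ^ 2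
  have hS : 0 ≤ S := sum_nonneg fun _ _ => sq_nonneg _
  have hcoord : ∀ k, |x k - y k| ≤ √S := fun k =>
    abs_le_sqrt <|
      single_le_sum (f := fun j => (x j - y j) ^ 2) (fun _ _ => sq_nonneg _) (mem_univ k)
  have hterm : ∀ j, (softmax x j - softmax y j) ^ 2 ≤ 2 * ((x j - y j) ^ 2 + S) := fun j =>
    calc (softmax x j - softmax y j) ^ 2 = |softmax x j - softmax y j| ^ 2 := (sq_abs _).symm
      _ ≤ (|x j - y j| + √S) ^ 2 := pow_le_pow_left₀ (abs_nonneg _) (abs_softmax_sub_le hcoord j) 2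
      _ ≤ 2 * (|x j - y j| ^ 2 + √S ^ 2) := add_sq_le
      _ = 2 * ((x j - y j) ^ 2 + S) := by rw [sq_abs, sq_sqrt hS]
  calc ∑ j, (softmax x j - softmax y j) ^ 2 ≤ ∑ j, 2 * ((x j - y j) ^ 2 + S) :=
        sum_le_sum fun j _ => hterm j
    _ = 2 * (1 + Fintype.card ι) * S := by
        rw [← mul_sum, sum_add_distrib, sum_const, card_univ, nsmul_eq_mul]; ring
    _ ≤ 4 * Fintype.card ι * S := by
        rcases isEmpty_or_nonempty ι with hι | hι
        · simp [S]
        have : (1 : ℝ) ≤ Fintype.card ι := by exact_mod_cast Fintype.card_pos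
        nlinarith

end Softmax

section Attention

variable {N M D : ℕ}

noncomputable def rowSoftmax (ρ : Matrix (Fin N) (Fin M) ℝ) : Matrix (Fin N) (Fin M) ℝ :=
  Matrix.of fun i => softmax (ρ i)

lemma frobNorm_rowSoftmax_le (ρ : Matrix (Fin N) (Fin M) ℝ) : frobNorm (rowSoftmax ρ) ≤ √N := by
  refine frobNorm_le_of_sq_le (sqrt_nonneg _) ?_
  calc ∑ i, ∑ j, rowSoftmax ρ i j ^ 2 ≤ ∑ _i : Fin N, (1 : ℝ) :=
        sum_le_sum fun i _ => sum_sq_softmax_le_one (ρ i)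
    _ = √N ^ 2 := by simp

lemma frobNorm_rowSoftmax_sub_le (ρ ρ' : Matrix (Fin N) (Fin M) ℝ) :
    frobNorm (rowSoftmax ρ - rowSoftmax ρ') ≤ 2 * √M * frobNorm (ρ - ρ') := by
  refine frobNorm_le_of_sq_le (mul_nonneg (by positivity) (frobNorm_nonneg _)) ?_
  calc ∑ i, ∑ j, (rowSoftmax ρ - rowSoftmax ρ') i j ^ 2
      ≤ ∑ i, 4 * M * ∑ j, (ρ - ρ') i j ^ 2 := by
        refine sum_le_sum fun i _ => (sum_sq_softmax_sub_le (ρ i) (ρ' i)).trans_eq ?_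
        rw [Fintype.card_fin]
        rfl
    _ = (2 * √M * frobNorm (ρ - ρ')) ^ 2 := by
        rw [← mul_sum, mul_pow, mul_pow, sq_sqrt (Nat.cast_nonneg M), frobNorm_sq]; ring

lemma attn_eq_rowSoftmax_mul (W WV : Matrix (Fin D) (Fin D) ℝ) (X : Matrix (Fin N) (Fin D) ℝ) :
    attn W WV X = rowSoftmax (X * W * Xᵀ) * (X * WV) := by
  set s : Fin N → ℝ := fun i => ∑ j, exp ((X * W * Xᵀ) i j)
  have hs : ∀ i, s i ≠ 0 := fun i =>
    (sum_pos (fun _ _ => exp_pos _) ⟨i, mem_univ i⟩).ne'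
  have hinv : (diagonal s)⁻¹ = diagonal fun i => (s i)⁻¹ := by
    refine inv_eq_left_inv ?_
    rw [diagonal_mul_diagonal, ← diagonal_one]
    exact congrArg diagonal (funext fun i => inv_mul_cancel₀ (hs i))
  rw [attn, hinv]
  congr 1
  ext i j
  simp [diagonal_mul, rowSoftmax, softmax, s, div_eq_inv_mul]

lemma frobNorm_mul_mul_transpose_sub_le (W : Matrix (Fin D) (Fin D) ℝ)
    (X Xt : Matrix (Fin N) (Fin D) ℝ) :
    frobNorm (X * W * Xᵀ - Xt * W * Xtᵀ) ≤
      specNorm W * (specNorm X + specNorm Xt) * frobNorm (X - Xt) := by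
  have hsplit : X * W * Xᵀ - Xt * W * Xtᵀ = (X - Xt) * (W * Xᵀ) + Xt * W * (X - Xt)ᵀ := by
    simp only [Matrix.sub_mul, Matrix.mul_sub, transpose_sub, Matrix.mul_assoc]; abel
  have := frobNorm_nonneg (X - Xt)
  calc frobNorm (X * W * Xᵀ - Xt * W * Xtᵀ)
      ≤ frobNorm (X - Xt) * specNorm (W * Xᵀ) + specNorm (Xt * W) * frobNorm (X - Xt)ᵀ := by
        rw [hsplit]
        exact (frobNorm_add_le _ _).trans (add_le_add
          (frobNorm_mul_le_frobNorm_mul_specNorm _ _) (frobNorm_mul_le_specNorm_mul_frobNorm _ _))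
    _ ≤ frobNorm (X - Xt) * (specNorm W * specNorm X)
          + specNorm Xt * specNorm W * frobNorm (X - Xt) := by
        rw [frobNorm_transpose]
        gcongr
        · exact (specNorm_mul_le _ _).trans_eq (by rw [specNorm_transpose])
        · exact specNorm_mul_le _ _
    _ = specNorm W * (specNorm X + specNorm Xt) * frobNorm (X - Xt) := by ring

lemma frobNorm_attn_sub_le (W WV : Matrix (Fin D) (Fin D) ℝ) (X Xt : Matrix (Fin N) (Fin D) ℝ) :
    frobNorm (attn W WV X - attn W WV Xt) ≤ √N * specNorm WV * (specNorm (X - Xt)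
      + 2 * specNorm Xt * specNorm W * (specNorm X + specNorm Xt) * frobNorm (X - Xt)) := by
  set S := rowSoftmax (X * W * Xᵀ)
  set St := rowSoftmax (Xt * W * Xtᵀ)
  have hsplit : attn W WV X - attn W WV Xt = S * ((X - Xt) * WV) + (S - St) * (Xt * WV) := by
    rw [attn_eq_rowSoftmax_mul, attn_eq_rowSoftmax_mul]
    simp only [Matrix.mul_sub, Matrix.sub_mul]; abel
  have hS : frobNorm (S * ((X - Xt) * WV)) ≤ √N * (specNorm (X - Xt) * specNorm WV) :=
    (frobNorm_mul_le_frobNorm_mul_specNorm _ _).trans <| mul_le_mul (frobNorm_rowSoftmax_le _)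
      (specNorm_mul_le _ _) (specNorm_nonneg _) (sqrt_nonneg _)
  have hSt : frobNorm ((S - St) * (Xt * WV)) ≤
      2 * √N * (specNorm W * (specNorm X + specNorm Xt) * frobNorm (X - Xt))
        * (specNorm Xt * specNorm WV) :=
    (frobNorm_mul_le_frobNorm_mul_specNorm _ _).trans <| mul_le_mul
      ((frobNorm_rowSoftmax_sub_le _ _).trans
        (mul_le_mul_of_nonneg_left (frobNorm_mul_mul_transpose_sub_le _ _ _) (by positivity)))
      (specNorm_mul_le _ _) (specNorm_nonneg _)
      (mul_nonneg (by positivity)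
        ((frobNorm_nonneg _).trans (frobNorm_mul_mul_transpose_sub_le _ _ _)))
  calc frobNorm (attn W WV X - attn W WV Xt)
      ≤ frobNorm (S * ((X - Xt) * WV)) + frobNorm ((S - St) * (Xt * WV)) :=
        hsplit ▸ frobNorm_add_le _ _
    _ ≤ _ := add_le_add hS hSt
    _ = _ := by ring

lemma frobNorm_attn_sub_le_of_specNorm_le {R μ : ℝ} (hR : 1 ≤ R)
    {W WV : Matrix (Fin D) (Fin D) ℝ} {X Xt : Matrix (Fin N) (Fin D) ℝ}
    (hW : specNorm W ≤ R) (hWV : specNorm WV ≤ R) (hX : specNorm X ≤ R) (hXt : specNorm Xt ≤ R)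
    (hspec : specNorm (X - Xt) ≤ μ) (hfrob : frobNorm (X - Xt) ≤ μ) :
    frobNorm (attn W WV X - attn W WV Xt) ≤ 5 * R ^ 4 * √N * μ := by
  have := specNorm_nonneg W; have := specNorm_nonneg X; have := specNorm_nonneg Xt
  have := specNorm_nonneg (X - Xt); have := frobNorm_nonneg (X - Xt)
  have hμ : 0 ≤ μ := (frobNorm_nonneg _).trans hfrob
  calc frobNorm (attn W WV X - attn W WV Xt)
      ≤ √N * specNorm WV * (specNorm (X - Xt)
        + 2 * specNorm Xt * specNorm W * (specNorm X + specNorm Xt) * frobNorm (X - Xt)) :=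
        frobNorm_attn_sub_le W WV X Xt
    _ ≤ √N * R * (μ + 2 * R * R * (R + R) * μ) := by gcongr
    _ = √N * μ * (R + 4 * R ^ 4) := by ring
    _ ≤ √N * μ * (R ^ 4 + 4 * R ^ 4) := by gcongr; exact le_self_pow₀ hR (by norm_num)
    _ = 5 * R ^ 4 * √N * μ := by ring

end Attention

/-- Similarity lower bound for the attention module: if ‖W‖, ‖W_V‖, ‖X‖, ‖X̃‖ ≤ R,
‖X − X̃‖ ≤ R₂, and the outputs Y = F(X), Ỹ = F(X̃) have unit Frobenius norm, then
tr[Yᵀ Ỹ] ≥ 1 − (1/2)·(5R⁴ND)²·R₂²·min{N,D}. -/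
theorem stmt_10 (N D : ℕ) (hN : 1 ≤ N) (hD : 1 ≤ D) (R R₂ : ℝ) (hR : 1 < R) (hR₂ : 0 ≤ R₂)
    (W WV : Matrix (Fin D) (Fin D) ℝ) (X Xt : Matrix (Fin N) (Fin D) ℝ)
    (hW : specNorm W ≤ R) (hWV : specNorm WV ≤ R)
    (hX : specNorm X ≤ R) (hXt : specNorm Xt ≤ R)
    (hdiff : specNorm (X - Xt) ≤ R₂)
    (hY : frobNorm (attn W WV X) = 1) (hYt : frobNorm (attn W WV Xt) = 1) :
    Matrix.trace ((attn W WV X).transpose * attn W WV Xt) ≥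
      1 - (1 / 2) * (5 * R ^ 4 * (N : ℝ) * (D : ℝ)) ^ 2 * R₂ ^ 2 * min (N : ℝ) (D : ℝ) := by
  have hN' : (1 : ℝ) ≤ N := by exact_mod_cast hN
  have hD' : (1 : ℝ) ≤ D := by exact_mod_cast hD
  set μ := √(min (N : ℝ) D) * R₂
  have hfrob : frobNorm (X - Xt) ≤ μ := (frobNorm_le_sqrt_min_mul_specNorm _).trans
    (mul_le_mul_of_nonneg_left hdiff (sqrt_nonneg _))
  have hspec : specNorm (X - Xt) ≤ μ :=
    hdiff.trans (le_mul_of_one_le_left hR₂ (one_le_sqrt.2 (le_min hN' hD')))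
  have hsqrtN : √N ≤ N * D :=
    (sqrt_le_self_iff.2 (Or.inr hN')).trans (le_mul_of_one_le_right (by positivity) hD')
  have hclose : frobNorm (attn W WV X - attn W WV Xt) ≤ 5 * R ^ 4 * (N * D) * μ :=
    (frobNorm_attn_sub_le_of_specNorm_le hR.le hW hWV hX hXt hspec hfrob).trans
      (by gcongr)
  have hclose_sq : frobNorm (attn W WV X - attn W WV Xt) ^ 2 ≤
      (5 * R ^ 4 * N * D) ^ 2 * R₂ ^ 2 * min (N : ℝ) D :=
    (pow_le_pow_left₀ (frobNorm_nonneg _) hclose 2).trans_eq <| by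
      rw [mul_pow, mul_pow √_, sq_sqrt (by positivity)]; ring
  have hpolar := frobNorm_sub_sq (attn W WV X) (attn W WV Xt)
  rw [hY, hYt] at hpolar
  linarith
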